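/- Consider F(x) = f(Ax) + δ_𝒳(x), where f : ℝ^n → ℝ is α-strongly convex and continuously differentiable, A ∈ ℝ^{n×d}, and 𝒳 = {x ∈ ℝ^d : Gx ≤ h} is a nonempty polyhedron. Let 𝒳* = argmin_{x∈𝒳} f(Ax) be nonempty and let K ⊆ 𝒳. Suppose there is a constant H_K > 0 such that dist(x, 𝒳*) ≤ H_K ‖A(x − x*)‖ for all x ∈ K, where x* is the Euclidean projection of x onto 𝒳*. If ν_K := α/H_K² satisfies ν_K ≤ L, then F satisfies the K-restricted proximal PL inequality with constant ν_K, i.e., (1/2)𝒟_g(x, L) ≥ (α/H_K²)(F(x) − F*) for all x ∈ K, where g = δ_𝒳. -/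

import Mathlib

noncomputable section

open Metric Set
open scoped RealInnerProductSpace

/-- `E d` is the Euclidean space `ℝ^d`. -/
abbrev E (d : ℕ) : Type := EuclideanSpace ℝ (Fin d)

/-- The generalized gradient size `𝒟_g(x, α)` for the composite objective
`F(x) = f(Ax) + δ_𝒳(x)`: since `g = δ_𝒳` is the indicator of `𝒳` and `x ∈ 𝒳`,
`𝒟_g(x, α) = −2α · min_{y ∈ 𝒳} [⟨Aᵀ∇f(Ax), y − x⟩ + (α/2)‖y − x‖²]`,
where `fn'` is the gradient of `f` (so `⟨Aᵀ∇f(Ax), y − x⟩ = ⟨∇f(Ax), A(y − x)⟩`). -/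
noncomputable def DgInd {n d : ℕ} (fn' : E n → E n) (A : E d →L[ℝ] E n) (X : Set (E d))
    (α : ℝ) (x : E d) : ℝ :=
  -(2 * α) * ⨅ y : X, (⟪fn' (A x), A (y : E d) - A x⟫ + α / 2 * ‖(y : E d) - x‖ ^ 2)

set_option maxHeartbeats 1000000

/-- Restricted PL for indicator functions.
Consider `F(x) = f(Ax) + δ_𝒳(x)` with `f` an `α`-strongly convex differentiable function,
`x ↦ f(Ax)` `L`-smooth, and `𝒳 = {x | ⟨G i, x⟩ ≤ h i ∀i}` a nonempty polyhedron.
Let `𝒳* = argmin_{x ∈ 𝒳} f(Ax)` (nonempty, with optimal value `F*`), let `K ⊆ 𝒳`,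
let `P` be the Euclidean projection onto `𝒳*`, and suppose
`dist(x, 𝒳*) = ‖x − P x‖ ≤ H ‖A(x − P x)‖` for all `x ∈ K` with `H > 0`.
If `ν := α/H² ≤ L`, then `F` satisfies the `K`-restricted proximal PL inequality with
constant `ν`, i.e. `(1/2)𝒟_g(x, L) ≥ (α/H²)(F(x) − F*)` for all `x ∈ K`. -/
theorem stmt_5 {n d m : ℕ} (f : E n → ℝ) (fn' : E n → E n)
    (A : E d →L[ℝ] E n) (G : Fin m → E d) (h : Fin m → ℝ)
    (α L H Fstar : ℝ) (K X Xstar : Set (E d)) (P : E d → E d)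
    (hX : X = {x | ∀ i, ⟪G i, x⟫ ≤ h i})
    (hXne : X.Nonempty)
    (hf' : ∀ z, HasGradientAt f (fn' z) z)
    (hα : 0 < α)
    (hsc : ∀ u v : E n, f u + ⟪fn' u, v - u⟫ + α / 2 * ‖v - u‖ ^ 2 ≤ f v)
    (hL : 0 < L)
    (hlip : ∀ x y : E d,
      ‖ContinuousLinearMap.adjoint A (fn' (A x)) -
        ContinuousLinearMap.adjoint A (fn' (A y))‖ ≤ L * ‖x - y‖)
    (hXstar : Xstar = {z ∈ X | ∀ x ∈ X, f (A z) ≤ f (A x)})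
    (hXstarne : Xstar.Nonempty)
    (hFstar : ∀ z ∈ Xstar, f (A z) = Fstar)
    (hP : ∀ x : E d, P x ∈ Xstar ∧ ∀ z ∈ Xstar, ‖x - P x‖ ≤ ‖x - z‖)
    (hK : K ⊆ X)
    (hH : 0 < H)
    (hHoff : ∀ x ∈ K, ‖x - P x‖ ≤ H * ‖A x - A (P x)‖)
    (hνL : α / H ^ 2 ≤ L) :
    ∀ x ∈ K, α / H ^ 2 * (f (A x) - Fstar) ≤ 1 / 2 * DgInd fn' A X L x := by
  intro x hxK
  have hxX : x ∈ X := hK hxK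
  have : Nonempty X := ⟨⟨x, hxX⟩⟩
  set xs := P x with hxs_def
  have hxsXstar : xs ∈ Xstar := (hP x).1
  have hxsX : xs ∈ X := by rw [hXstar] at hxsXstar; exact hxsXstar.1
  have hFxs : f (A xs) = Fstar := hFstar xs hxsXstar
  set θ : ℝ := α / (L * H ^ 2) with hθ_def
  have hH2 : (0:ℝ) < H ^ 2 := by positivity
  have hθpos : 0 < θ := by positivity
  have hθα : θ * (L * H ^ 2) = α := by
    rw [hθ_def]; exact div_mul_cancel₀ α (by positivity)
  have hθ1 : θ ≤ 1 := by
    rw [hθ_def, div_le_one (by positivity)]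
    calc α = α / H ^ 2 * H ^ 2 := by field_simp
    _ ≤ L * H ^ 2 := by nlinarith
  set y₀ : E d := x + θ • (xs - x) with hy₀_def
  have hy₀X : y₀ ∈ X := by
    rw [hX]; intro i
    have h1 : ⟪G i, x⟫ ≤ h i := by rw [hX] at hxX; exact hxX i
    have h2 : ⟪G i, xs⟫ ≤ h i := by rw [hX] at hxsX; exact hxsX i
    have : ⟪G i, y₀⟫ = (1 - θ) * ⟪G i, x⟫ + θ * ⟪G i, xs⟫ := by
      simp only [hy₀_def, inner_add_right, inner_smul_right, inner_sub_right]
      ring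
    rw [this]
    nlinarith
  -- the value of the objective at y₀
  set c : ℝ := ⟪fn' (A x), A xs - A x⟫ with hc_def
  set s : ℝ := ‖A xs - A x‖ ^ 2 with hs_def
  have hy₀x : y₀ - x = θ • (xs - x) := by rw [hy₀_def]; abel
  have hval : ⟪fn' (A x), A y₀ - A x⟫ + L / 2 * ‖y₀ - x‖ ^ 2
      = θ * c + L / 2 * θ ^ 2 * ‖xs - x‖ ^ 2 := by
    have hA : A y₀ - A x = θ • (A xs - A x) := by
      rw [← map_sub, hy₀x, map_smul, map_sub]
    rw [hA, hy₀x, real_inner_smul_right, norm_smul, Real.norm_eq_abs,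
      abs_of_pos hθpos, hc_def]
    ring
  -- strong convexity bound
  have hsc' : c ≤ Fstar - f (A x) - α / 2 * s := by
    have := hsc (A x) (A xs)
    rw [hFxs] at this
    simp only [hc_def, hs_def]
    linarith
  -- hoffman bound
  have hhoff : ‖xs - x‖ ^ 2 ≤ H ^ 2 * s := by
    have h1 := hHoff x hxK
    rw [← hxs_def] at h1
    have h2 : ‖xs - x‖ = ‖x - xs‖ := by rw [norm_sub_rev]
    have h3 : ‖A xs - A x‖ = ‖A x - A xs‖ := by rw [norm_sub_rev]
    have hn1 : (0:ℝ) ≤ ‖x - xs‖ := norm_nonneg _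
    have hn2 : (0:ℝ) ≤ ‖A x - A xs‖ := norm_nonneg _
    rw [h2, hs_def, h3]
    nlinarith
  have hsnn : 0 ≤ s := by positivity
  have hvalbound : ⟪fn' (A x), A y₀ - A x⟫ + L / 2 * ‖y₀ - x‖ ^ 2
      ≤ θ * (Fstar - f (A x)) := by
    rw [hval]
    have key : L / 2 * θ ^ 2 * ‖xs - x‖ ^ 2 ≤ θ * (α / 2) * s := by
      calc L / 2 * θ ^ 2 * ‖xs - x‖ ^ 2 ≤ L / 2 * θ ^ 2 * (H ^ 2 * s) :=
          mul_le_mul_of_nonneg_left hhoff (by positivity)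
      _ = θ * (θ * (L * H ^ 2)) / 2 * s := by ring
      _ = θ * (α / 2) * s := by rw [hθα]; ring
    nlinarith
  -- bounded below
  have hbdd : BddBelow (Set.range fun y : X =>
      (⟪fn' (A x), A (y : E d) - A x⟫ + L / 2 * ‖(y : E d) - x‖ ^ 2)) := by
    use -(‖fn' (A x)‖ * ‖A‖) ^ 2 / (2 * L)
    rintro v ⟨y, rfl⟩
    set t : ℝ := ‖(y : E d) - x‖ with ht
    set b : ℝ := ‖fn' (A x)‖ * ‖A‖ with hb
    have htnn : 0 ≤ t := norm_nonneg _
    have hbnn : 0 ≤ b := by positivity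
    have h1 : -(b * t) ≤ ⟪fn' (A x), A (y : E d) - A x⟫ := by
      have h2 : |⟪fn' (A x), A (y : E d) - A x⟫| ≤ ‖fn' (A x)‖ * ‖A ((y : E d) - x)‖ := by
        rw [← map_sub]
        exact abs_real_inner_le_norm _ _
      have h3 : ‖A ((y : E d) - x)‖ ≤ ‖A‖ * t := A.le_opNorm _
      have h4 : |⟪fn' (A x), A (y : E d) - A x⟫| ≤ b * t := by
        refine le_trans h2 ?_
        rw [hb, mul_assoc]
        exact mul_le_mul_of_nonneg_left h3 (norm_nonneg _)
      have := neg_abs_le ⟪fn' (A x), A (y : E d) - A x⟫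
      linarith
    have : -(b ^ 2) / (2 * L) ≤ -(b * t) + L / 2 * t ^ 2 := by
      rw [div_le_iff₀ (by positivity : (0:ℝ) < 2 * L)]
      nlinarith [sq_nonneg (L * t - b)]
    calc -b ^ 2 / (2 * L) ≤ -(b * t) + L / 2 * t ^ 2 := by
          simpa using this
    _ ≤ _ := by linarith
  have hinf : (⨅ y : X, (⟪fn' (A x), A (y : E d) - A x⟫ + L / 2 * ‖(y : E d) - x‖ ^ 2))
      ≤ θ * (Fstar - f (A x)) :=
    le_trans (ciInf_le hbdd ⟨y₀, hy₀X⟩) hvalbound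
  have hν : α / H ^ 2 = L * θ := by field_simp [hθ_def]; linarith [hθα]
  rw [DgInd]
  have : α / H ^ 2 * (f (A x) - Fstar) = -(L * θ * (Fstar - f (A x))) := by rw [hν]; ring
  rw [this]
  nlinarith [mul_le_mul_of_nonneg_left hinf hL.le]
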